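/- Let v, w be nonzero vectors in F_2^n with v·w = 0 (Euclidean inner product). The number of k_2-dimensional subspaces C_2 of F_2^n such that v ∈ C_2 and w ∈ C_2^⊥ equals the Gaussian binomial coefficient [n-2 choose k_2-1]_2. -/

import Mathlib

/-!
Subspaces `C` with `v ∈ C ⊆ w^⊥` are the subspaces of the hyperplane `W = w^⊥` (which contains
`v` because `v·w = 0`) that contain the line `𝔽₂ v`, and these correspond to the subspaces of
`W / 𝔽₂ v`, of dimension `n - 2`, with dimension dropping by one. The number of `k`-dimensional
subspaces of an `m`-dimensional space is `[m choose k]₂`: grouping the ordered `k`-tuples of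
independent vectors by their span shows that this number times the number of ordered bases of
`𝔽₂ᵏ` equals the number of such tuples.
-/

/-- `[m]! = ∏_{i=1}^m (2^i - 1)`. -/
noncomputable def gaussFact (m : ℕ) : ℚ := ∏ i ∈ Finset.range m, ((2:ℚ)^(i+1) - 1)

/-- Binary Gaussian binomial coefficient `[n choose k]_2`. -/
noncomputable def gaussBinom (n k : ℕ) : ℚ := gaussFact n / (gaussFact k * gaussFact (n - k))

open Finset Module Submodule

lemma gaussFact_ne_zero (m : ℕ) : gaussFact m ≠ 0 :=
  prod_ne_zero_iff.mpr fun i _ => sub_ne_zero.mpr (one_lt_pow₀ one_lt_two i.succ_ne_zero).ne'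

lemma prod_range_two_pow_sub_one_mul_gaussFact {m k : ℕ} (h : k ≤ m) :
    (∏ i ∈ range k, ((2:ℚ) ^ (m - i) - 1)) * gaussFact (m - k) = gaussFact m := by
  induction k with
  | zero => simp
  | succ k ih =>
    have hstep : gaussFact (m - k) = gaussFact (m - (k + 1)) * (2 ^ (m - k) - 1) := by
      rw [show m - k = (m - (k + 1)) + 1 by omega]
      exact prod_range_succ _ _
    rw [prod_range_succ, ← ih (by omega), hstep]
    ring

lemma prod_range_two_pow_sub_two_pow {m k : ℕ} (h : k ≤ m) :
    ∏ i ∈ range k, ((2:ℚ) ^ m - 2 ^ i)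
      = 2 ^ (∑ i ∈ range k, i) * ∏ i ∈ range k, ((2:ℚ) ^ (m - i) - 1) := by
  rw [← prod_pow_eq_pow_sum, ← prod_mul_distrib]
  refine prod_congr rfl fun i hi => ?_
  rw [mul_sub, ← pow_add, Nat.add_sub_cancel' (by have := mem_range.mp hi; omega), mul_one]

lemma gaussBinom_mul_prod_range {m k : ℕ} (h : k ≤ m) :
    gaussBinom m k * ∏ i ∈ range k, ((2:ℚ) ^ k - 2 ^ i) = ∏ i ∈ range k, ((2:ℚ) ^ m - 2 ^ i) := by
  have hk := prod_range_two_pow_sub_one_mul_gaussFact (le_refl k)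
  rw [Nat.sub_self, gaussFact, range_zero, prod_empty, mul_one] at hk
  rw [prod_range_two_pow_sub_two_pow h, prod_range_two_pow_sub_two_pow le_rfl, hk, gaussBinom,
    ← prod_range_two_pow_sub_one_mul_gaussFact h]
  have := gaussFact_ne_zero k
  have := gaussFact_ne_zero (m - k)
  field_simp

lemma natCast_prod_two_pow_sub_two_pow {m k : ℕ} (h : k ≤ m) :
    ((∏ i : Fin k, (2 ^ m - 2 ^ (i : ℕ)) : ℕ) : ℚ) = ∏ i ∈ range k, ((2:ℚ) ^ m - 2 ^ i) := by
  rw [Nat.cast_prod, ← Fin.prod_univ_eq_prod_range]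
  refine prod_congr rfl fun i _ => ?_
  rw [Nat.cast_sub (Nat.pow_le_pow_right two_pos (i.2.le.trans h))]
  push_cast
  rfl

section CountSubmodules

variable {K V : Type*} [DivisionRing K] [AddCommGroup V] [Module K V]

lemma span_range_subtype_eq_of_linearIndependent [FiniteDimensional K V]
    {S : Submodule K V} {k : ℕ} (hS : finrank K S = k) {t : Fin k → S}
    (ht : LinearIndependent K t) : span K (Set.range fun i => (t i : V)) = S := by
  have htop : span K (Set.range t) = ⊤ := ht.span_eq_top_of_card_eq_finrank' (by simp [hS])
  rw [show (fun i => (t i : V)) = S.subtype ∘ t from rfl, Set.range_comp, ← map_span, htop,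
    Submodule.map_top, range_subtype]

noncomputable def linearIndependentSigmaEquiv [FiniteDimensional K V] (k : ℕ) :
    (Σ S : {S : Submodule K V // finrank K S = k}, {t : Fin k → S.1 // LinearIndependent K t})
      ≃ {s : Fin k → V // LinearIndependent K s} := by
  refine Equiv.ofBijective
    (fun x => ⟨fun i => (x.2.1 i : V), x.2.2.map' x.1.1.subtype (ker_subtype _)⟩) ⟨?_, ?_⟩
  · rintro ⟨⟨S, hS⟩, ⟨t, ht⟩⟩ ⟨⟨S', hS'⟩, ⟨t', ht'⟩⟩ h
    replace h : (fun i => (t i : V)) = fun i => (t' i : V) := congrArg Subtype.val h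
    obtain rfl : S = S' := by
      rw [← span_range_subtype_eq_of_linearIndependent hS ht,
        ← span_range_subtype_eq_of_linearIndependent hS' ht', h]
    obtain rfl : t = t' := funext fun i => Subtype.ext (congrFun h i)
    rfl
  · rintro ⟨s, hs⟩
    refine ⟨⟨⟨span K (Set.range s), ?_⟩, ⟨fun i => ⟨s i, subset_span ⟨i, rfl⟩⟩, ?_⟩⟩, rfl⟩
    · rw [finrank_span_eq_card hs, Fintype.card_fin]
    · exact hs.of_comp (span K (Set.range s)).subtype

variable [Fintype K] [FiniteDimensional K V]

theorem card_submodules_finrank_eq_mul {k : ℕ} (hk : k ≤ finrank K V) :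
    Nat.card {S : Submodule K V // finrank K S = k}
        * ∏ i : Fin k, (Fintype.card K ^ k - Fintype.card K ^ (i : ℕ))
      = ∏ i : Fin k, (Fintype.card K ^ finrank K V - Fintype.card K ^ (i : ℕ)) := by
  have : Finite V := Module.finite_of_finite K
  have := Fintype.ofFinite {S : Submodule K V // finrank K S = k}
  have hfiber (S : {S : Submodule K V // finrank K S = k}) :
      Nat.card {t : Fin k → S.1 // LinearIndependent K t}
        = ∏ i : Fin k, (Fintype.card K ^ k - Fintype.card K ^ (i : ℕ)) := by
    simpa [S.2] using card_linearIndependent (K := K) (V := S.1) S.2.ge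
  rw [← card_linearIndependent hk, ← Nat.card_congr (linearIndependentSigmaEquiv k),
    Nat.card_sigma, sum_congr rfl fun S _ => hfiber S, sum_const, card_univ,
    Nat.card_eq_fintype_card, smul_eq_mul]

end CountSubmodules

lemma card_submodules_finrank_eq_gaussBinom {V : Type*} [AddCommGroup V] [Module (ZMod 2) V]
    [FiniteDimensional (ZMod 2) V] {k : ℕ} (hk : k ≤ finrank (ZMod 2) V) :
    (Nat.card {S : Submodule (ZMod 2) V // finrank (ZMod 2) S = k} : ℚ)
      = gaussBinom (finrank (ZMod 2) V) k := by
  have hcount := congrArg (Nat.cast (R := ℚ)) (card_submodules_finrank_eq_mul (K := ZMod 2) hk)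
  rw [ZMod.card, Nat.cast_mul, natCast_prod_two_pow_sub_two_pow hk,
    natCast_prod_two_pow_sub_two_pow le_rfl, ← gaussBinom_mul_prod_range hk] at hcount
  refine mul_right_cancel₀ (prod_ne_zero_iff.mpr fun i hi => sub_ne_zero.mpr ?_) hcount
  exact (pow_lt_pow_right₀ one_lt_two (mem_range.mp hi)).ne'

section Correspondence

variable {R M : Type*} [Ring R] [AddCommGroup M] [Module R M]

def submodulesLeEquiv (W : Submodule R M) (P : Submodule R M → Prop) :
    {D : Submodule R W // P (D.map W.subtype)} ≃ {C : Submodule R M // C ≤ W ∧ P C} :=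
  ((MapSubtype.orderIso W).toEquiv.subtypeEquiv fun _ => Iff.rfl).trans
    (Equiv.subtypeSubtypeEquivSubtypeInter _ _)

def submodulesGeEquiv (p : Submodule R M) (P : Submodule R M → Prop) :
    {E : Submodule R (M ⧸ p) // P (E.comap p.mkQ)} ≃ {D : Submodule R M // p ≤ D ∧ P D} :=
  ((comapMkQRelIso p).toEquiv.subtypeEquiv fun _ => Iff.rfl).trans
    (Equiv.subtypeSubtypeEquivSubtypeInter (fun D => p ≤ D) _)

end Correspondence

section Quotient

variable {K W : Type*} [DivisionRing K] [AddCommGroup W] [Module K W] [FiniteDimensional K W]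

lemma finrank_comap_mkQ (p : Submodule K W) (E : Submodule K (W ⧸ p)) :
    finrank K (E.comap p.mkQ) = finrank K E + finrank K p := by
  set D := E.comap p.mkQ
  let f : D →ₗ[K] W ⧸ p := p.mkQ ∘ₗ D.subtype
  have hrange : LinearMap.range f = E := by
    rw [LinearMap.range_comp, range_subtype, map_comap_eq_self (by simp)]
  have hker : LinearMap.ker f = p.comap D.subtype := by
    rw [LinearMap.ker_comp, ker_mkQ]
  rw [← f.finrank_range_add_finrank_ker, hrange, hker,
    (comapSubtypeEquivOfLe (le_comap_mkQ p E)).finrank_eq]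

end Quotient

theorem card_submodules_mem_le {K V : Type*} [DivisionRing K] [AddCommGroup V] [Module K V]
    [FiniteDimensional K V] {W : Submodule K V} {v : V} (hvW : v ∈ W) (hv : v ≠ 0) (k : ℕ) :
    Nat.card {C : Submodule K V // finrank K C = k + 1 ∧ v ∈ C ∧ C ≤ W}
      = Nat.card {E : Submodule K (W ⧸ K ∙ (⟨v, hvW⟩ : W)) // finrank K E = k} := by
  set p := K ∙ (⟨v, hvW⟩ : W)
  have hp : finrank K p = 1 := finrank_span_singleton (by simpa using hv)
  symm
  refine Nat.card_congr <| (Equiv.subtypeEquivRight fun E => ?_).trans <|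
    (submodulesGeEquiv p fun D => finrank K D = k + 1).trans <|
    (Equiv.subtypeEquivRight fun D => ?_).trans <|
    (submodulesLeEquiv W fun C => finrank K C = k + 1 ∧ v ∈ C).trans <|
    Equiv.subtypeEquivRight fun C => ?_
  · rw [finrank_comap_mkQ, hp, Nat.add_right_cancel_iff]
  · rw [span_singleton_le_iff_mem, finrank_map_subtype_eq, and_comm]
    refine ⟨fun h => ⟨h.1, _, h.2, rfl⟩, ?_⟩
    rintro ⟨h, x, hx, hxv⟩
    obtain rfl : x = ⟨v, hvW⟩ := Subtype.ext hxv
    exact ⟨h, hx⟩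
  · tauto

theorem card_submodules_mem_le_eq_gaussBinom {V : Type*} [AddCommGroup V] [Module (ZMod 2) V]
    [FiniteDimensional (ZMod 2) V] {W : Submodule (ZMod 2) V} {v : V} (hvW : v ∈ W) (hv : v ≠ 0)
    {k : ℕ} (hk : k + 1 ≤ finrank (ZMod 2) W) :
    (Nat.card {C : Submodule (ZMod 2) V // finrank (ZMod 2) C = k + 1 ∧ v ∈ C ∧ C ≤ W} : ℚ)
      = gaussBinom (finrank (ZMod 2) W - 1) k := by
  have hquot := (ZMod 2 ∙ (⟨v, hvW⟩ : W)).finrank_quotient_add_finrank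
  rw [finrank_span_singleton (by simpa using hv)] at hquot
  rw [card_submodules_mem_le hvW hv, card_submodules_finrank_eq_gaussBinom (by omega),
    ← hquot, Nat.add_sub_cancel]

theorem count_codes_v_in_code_w_in_dual (n k₂ : ℕ) (h1 : 1 ≤ k₂) (h₂ : k₂ ≤ n - 1)
    (v w : Fin n → ZMod 2) (hv : v ≠ 0) (hw : w ≠ 0)
    (hvw : ∑ i, v i * w i = 0) :
    (Nat.card {C₂ : Submodule (ZMod 2) (Fin n → ZMod 2) //
        Module.finrank (ZMod 2) C₂ = k₂ ∧ v ∈ C₂ ∧ ∀ c ∈ C₂, ∑ i, w i * c i = 0} : ℚ)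
      = gaussBinom (n - 2) (k₂ - 1) := by
  let φ : Module.Dual (ZMod 2) (Fin n → ZMod 2) := dotProductBilin (ZMod 2) (ZMod 2) w
  have hφ : φ ≠ 0 := by
    refine fun h => hw (funext fun j => ?_)
    simpa [φ, dotProduct_single] using LinearMap.congr_fun h (Pi.single j 1)
  have hvφ : v ∈ LinearMap.ker φ := (dotProduct_comm w v).trans hvw
  have hker := φ.finrank_ker_add_one_of_ne_zero hφ
  rw [finrank_fin_fun] at hker
  obtain ⟨k, rfl⟩ : ∃ k, k₂ = k + 1 := ⟨k₂ - 1, by omega⟩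
  have hdual : ∀ C : Submodule (ZMod 2) (Fin n → ZMod 2),
      (∀ c ∈ C, ∑ i, w i * c i = 0) ↔ C ≤ LinearMap.ker φ := fun _ => Iff.rfl
  simp_rw [hdual]
  rw [card_submodules_mem_le_eq_gaussBinom hvφ hv (by omega), Nat.add_sub_cancel]
  congr 1
  omega
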